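/- Let X be a real m×n matrix and Z a real n×n matrix such that X = XZ and ‖Z‖_* = rank(X). Then rank(Z) = rank(X) and every nonzero singular value of Z equals 1. -/

import Mathlib

open Matrix

/-- The nuclear norm of a real matrix: the sum of its singular values
(the square roots of the eigenvalues of `Aᵀ * A`). -/
noncomputable def nuclearNorm {m n : Type*} [Fintype m] [Fintype n] [DecidableEq n]
    (A : Matrix m n ℝ) : ℝ :=
  ∑ i, Real.sqrt ((show (Aᵀ * A).IsHermitian by
    simpa only [Matrix.conjTranspose_eq_transpose_of_trivial] using
      Matrix.isHermitian_conjTranspose_mul_self A).eigenvalues i)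

/-- The singular values of a real matrix: the square roots of the eigenvalues
of `Aᵀ * A`. -/
noncomputable def singularValues {m n : Type*} [Fintype m] [Fintype n] [DecidableEq n]
    (A : Matrix m n ℝ) : n → ℝ :=
  fun i => Real.sqrt ((show (Aᵀ * A).IsHermitian by
    simpa only [Matrix.conjTranspose_eq_transpose_of_trivial] using
      Matrix.isHermitian_conjTranspose_mul_self A).eigenvalues i)

/-!
Let `P` be the orthogonal projection onto the row space `(ker X)ᗮ` of `X` and let `u` be an
orthonormal eigenbasis of `Zᵀ * Z`, so that the singular values are `σ j = ‖Z u j‖`. Since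
`X (Z x - x) = 0`, we get `P (Z u j) = P (u j)`, hence `‖P u j‖ ≤ σ j`. Together with
`‖P u j‖ ≤ 1` and `∑ ‖P u j‖ ^ 2 = rank X` (the trace of `P`) this gives
`rank X = ∑ ‖P u j‖ ^ 2 ≤ ∑ ‖P u j‖ ≤ ∑ σ j = ‖Z‖_* = rank X`, so every `σ j = ‖P u j‖` lies in
`{0, 1}`. The rank of `Z` is the number of nonzero `σ j`, which is then `∑ σ j = rank X`.
-/

namespace Submodule

variable {𝕜 E : Type*} [RCLike 𝕜] [NormedAddCommGroup E] [InnerProductSpace 𝕜 E]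

theorem norm_starProjection_le_of_sub_mem_orthogonal (K : Submodule 𝕜 E)
    [K.HasOrthogonalProjection] {x y : E} (h : y - x ∈ Kᗮ) :
    ‖K.starProjection x‖ ≤ ‖y‖ := by
  have hxy : K.starProjection x = K.starProjection y := by
    rw [← sub_eq_zero, ← map_sub, starProjection_apply_eq_zero_iff, ← neg_mem_iff, neg_sub]
    exact h
  rw [hxy]
  exact K.norm_starProjection_apply_le y

theorem sum_sq_norm_starProjection_orthonormalBasis [FiniteDimensional 𝕜 E] {ι : Type*}
    [Fintype ι] (u : OrthonormalBasis ι 𝕜 E) (V : Submodule 𝕜 E) :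
    ∑ j, ‖V.starProjection (u j)‖ ^ 2 = Module.finrank 𝕜 V := by
  let b := stdOrthonormalBasis 𝕜 V
  have hparseval (x : E) : ‖V.starProjection x‖ ^ 2 = ∑ i, ‖inner 𝕜 (b i : E) x‖ ^ 2 := by
    rw [starProjection_apply, norm_coe, ← b.sum_sq_norm_inner_right]
    simp only [inner_orthogonalProjectionOnto_eq_of_mem_left]
  simp_rw [hparseval]
  rw [Finset.sum_comm]
  simp_rw [u.sum_sq_norm_inner_left, norm_coe, b.orthonormal.1, one_pow, Finset.sum_const,
    Finset.card_univ, Fintype.card_fin, nsmul_one]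

end Submodule

theorem Matrix.finrank_orthogonal_ker_toEuclideanLin {𝕜 m n : Type*} [RCLike 𝕜] [Fintype m]
    [Fintype n] [DecidableEq n] (A : Matrix m n 𝕜) :
    Module.finrank 𝕜 (LinearMap.ker (toEuclideanLin A))ᗮ = A.rank := by
  have hrank : A.rank = Module.finrank 𝕜 (LinearMap.range (toEuclideanLin A)) := by
    rw [toEuclideanLin_eq_toLin_orthonormal]
    exact A.rank_eq_finrank_range_toLin _ _
  have := (LinearMap.ker (toEuclideanLin A)).finrank_add_finrank_orthogonal
  have := (toEuclideanLin A).finrank_range_add_finrank_ker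
  omega

theorem eq_zero_or_one_of_sum_eq_sum_sq {ι : Type*} [Fintype ι] {a s : ι → ℝ}
    (ha₀ : ∀ j, 0 ≤ a j) (ha₁ : ∀ j, a j ≤ 1) (has : ∀ j, a j ≤ s j)
    (hsum : ∑ j, s j = ∑ j, a j ^ 2) (j : ι) : s j = 0 ∨ s j = 1 := by
  have hsq (j : ι) : a j ^ 2 ≤ s j := (sq_le (ha₀ j) (ha₁ j)).trans (has j)
  have hs : s j = a j ^ 2 :=
    ((Finset.sum_eq_sum_iff_of_le fun j _ => hsq j).1 hsum.symm j (Finset.mem_univ j)).symm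
  have ha : a j ^ 2 = a j := le_antisymm (sq_le (ha₀ j) (ha₁ j)) (hs ▸ has j)
  rw [hs, ha]
  exact eq_zero_or_one_of_sq_eq_self ha

theorem card_ne_zero_eq_sum_of_eq_zero_or_one {ι : Type*} [Fintype ι] {s : ι → ℝ}
    (hs : ∀ j, s j = 0 ∨ s j = 1) : (Fintype.card {j // s j ≠ 0} : ℝ) = ∑ j, s j := by
  rw [Fintype.card_subtype, Finset.natCast_card_filter]
  refine Finset.sum_congr rfl fun j _ => ?_
  rcases hs j with h | h <;> simp [h]

theorem isHermitian_transpose_mul_self {m n : Type*} [Fintype m] (A : Matrix m n ℝ) :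
    (Aᵀ * A).IsHermitian := by
  simpa only [conjTranspose_eq_transpose_of_trivial] using isHermitian_conjTranspose_mul_self A

section SingularValues

variable {m n : Type*} [Fintype m] [Fintype n] [DecidableEq n] (A : Matrix m n ℝ)

theorem nuclearNorm_eq_sum_singularValues : nuclearNorm A = ∑ j, singularValues A j := rfl

theorem singularValues_eq_sqrt_eigenvalues (hA : (Aᵀ * A).IsHermitian) (j : n) :
    singularValues A j = √(hA.eigenvalues j) := rfl

theorem eigenvalues_transpose_mul_self_eq_norm_sq (hA : (Aᵀ * A).IsHermitian) (j : n) :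
    hA.eigenvalues j = ‖toEuclideanLin A (hA.eigenvectorBasis j)‖ ^ 2 := by
  classical
  set u := hA.eigenvectorBasis j
  have hAu : toEuclideanLin Aᵀ (toEuclideanLin A u) = hA.eigenvalues j • u := by
    rw [← LinearMap.comp_apply, ← toLpLin_mul_same, toLpLin_apply, hA.mulVec_eigenvectorBasis]
    rfl
  rw [← real_inner_self_eq_norm_sq, ← LinearMap.adjoint_inner_left,
    ← toEuclideanLin_conjTranspose_eq_adjoint, conjTranspose_eq_transpose_of_trivial, hAu,
    real_inner_smul_left, real_inner_self_eq_norm_sq, hA.eigenvectorBasis.orthonormal.1 j, one_pow,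
    mul_one]

theorem singularValues_eq_norm_eigenvectorBasis (hA : (Aᵀ * A).IsHermitian) (j : n) :
    singularValues A j = ‖toEuclideanLin A (hA.eigenvectorBasis j)‖ := by
  rw [singularValues_eq_sqrt_eigenvalues A hA, eigenvalues_transpose_mul_self_eq_norm_sq,
    Real.sqrt_sq (norm_nonneg _)]

theorem rank_eq_card_singularValues_ne_zero :
    A.rank = Fintype.card {j // singularValues A j ≠ 0} := by
  let hA := isHermitian_transpose_mul_self A
  rw [← rank_transpose_mul_self, hA.rank_eq_card_non_zero_eigs]
  refine Fintype.card_congr (Equiv.subtypeEquivRight fun j => ?_)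
  rw [singularValues_eq_sqrt_eigenvalues A hA, Ne, Ne,
    Real.sqrt_eq_zero (by rw [eigenvalues_transpose_mul_self_eq_norm_sq]; positivity)]

end SingularValues

/-- If `X = X * Z` and the nuclear norm of `Z` equals `rank X`, then `rank Z = rank X`
and every nonzero singular value of `Z` equals `1`. -/
theorem rank_eq_and_singularValues_eq_one {m n : ℕ} (X : Matrix (Fin m) (Fin n) ℝ)
    (Z : Matrix (Fin n) (Fin n) ℝ) (hXZ : X = X * Z)
    (hnn : nuclearNorm Z = (X.rank : ℝ)) :
    Z.rank = X.rank ∧ ∀ i : Fin n, singularValues Z i ≠ 0 → singularValues Z i = 1 := by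
  let K := LinearMap.ker (toEuclideanLin X)
  let hZ := isHermitian_transpose_mul_self Z
  let u := hZ.eigenvectorBasis
  have hfix (x : EuclideanSpace ℝ (Fin n)) : toEuclideanLin Z x - x ∈ Kᗮᗮ :=
    K.le_orthogonal_orthogonal <| by
      rw [LinearMap.mem_ker, map_sub, ← LinearMap.comp_apply, ← toLpLin_mul_same, ← hXZ, sub_self]
  have hle (j : Fin n) : ‖Kᗮ.starProjection (u j)‖ ≤ singularValues Z j := by
    rw [singularValues_eq_norm_eigenvectorBasis Z hZ]
    exact Kᗮ.norm_starProjection_le_of_sub_mem_orthogonal (hfix _)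
  have hsum : ∑ j, singularValues Z j = ∑ j, ‖Kᗮ.starProjection (u j)‖ ^ 2 := by
    rw [Submodule.sum_sq_norm_starProjection_orthonormalBasis,
      X.finrank_orthogonal_ker_toEuclideanLin, ← hnn, nuclearNorm_eq_sum_singularValues]
  have h01 := eq_zero_or_one_of_sum_eq_sum_sq (fun j => norm_nonneg _)
    (fun j => (Kᗮ.norm_starProjection_apply_le _).trans_eq (u.orthonormal.1 j)) hle hsum
  refine ⟨?_, fun j hj => (h01 j).resolve_left hj⟩
  rw [← Nat.cast_inj (R := ℝ), rank_eq_card_singularValues_ne_zero,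
    card_ne_zero_eq_sum_of_eq_zero_or_one h01, ← nuclearNorm_eq_sum_singularValues, hnn]
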